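/- arXiv:2308.08222 — 2 statements merged into one kernel-verified Lean document; each statement's English description precedes it below -/
import Mathlib

section
/- Sign preservation under both perturbations: under the hypotheses of the previous statement, (wᵀx + b)·(Q(w)ᵀ(x+Δx) + Q(b)) ≥ 0. -/
open RealInnerProductSpace

/-- Sign preservation under both weight quantization and input perturbation. -/
theorem quantized_classifier_sign_preserved {n : ℕ}
    (w x Δx Qw : EuclideanSpace ℝ (Fin n)) (b Qb : ℝ)
    (hx : ‖x‖ ≤ 1) (hΔx : ‖Δx‖ ≤ 1)
    (hpos : 0 < ⟪w, x⟫ + b) (hpos' : 0 < ⟪w, x + Δx⟫ + b)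
    (hQw : ‖Qw - w‖ ≤ (1 / 4) * (⟪w, x + Δx⟫ + b))
    (hQb : |Qb - b| ≤ (1 / 4) * (⟪w, x + Δx⟫ + b)) :
    0 ≤ (⟪w, x⟫ + b) * (⟪Qw, x + Δx⟫ + Qb) := by
  set s := ⟪w, x + Δx⟫ + b with hs
  have hy : ‖x + Δx‖ ≤ 2 := by
    calc ‖x + Δx‖ ≤ ‖x‖ + ‖Δx‖ := norm_add_le _ _
    _ ≤ 2 := by linarith
  have hinner : |⟪Qw - w, x + Δx⟫| ≤ (1 / 4) * s * 2 := by
    calc |⟪Qw - w, x + Δx⟫| ≤ ‖Qw - w‖ * ‖x + Δx‖ := abs_real_inner_le_norm _ _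
    _ ≤ (1 / 4) * s * 2 := by
        apply mul_le_mul hQw hy (norm_nonneg _)
        positivity
  have hdiff : ⟪Qw, x + Δx⟫ = ⟪w, x + Δx⟫ + ⟪Qw - w, x + Δx⟫ := by
    rw [inner_sub_left]; ring
  have h1 := abs_le.mp hinner
  have h2 := abs_le.mp hQb
  have : 0 ≤ ⟪Qw, x + Δx⟫ + Qb := by
    rw [hdiff]
    have : ⟪w, x + Δx⟫ = s - b := by rw [hs]; ring
    rw [this]
    linarith [h1.1, h2.1]
  exact mul_nonneg hpos.le this
end

section
/- Integrate-and-fire spike count correctness: fix a threshold θ > 0 and a constant input x with 0 ≤ x ≤ θ. Define V₀ = 0 and at each step i (1 ≤ i ≤ T): V'ᵢ = V_{i-1} + x; if V'ᵢ ≥ θ then sᵢ = 1 and Vᵢ = V'ᵢ − θ, else sᵢ = 0 and Vᵢ = V'ᵢ. Then for all i, Vᵢ = i·x − θ·(Σ_{j≤i} sⱼ) and 0 ≤ Vᵢ < θ; consequently the total spike count satisfies Σ_{i=1}^T sᵢ = ⌊T·x/θ⌋. -/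
/-! Each step adds `x` and subtracts `θ` per spike, so `V_T = T x - θ n` with `n` the spike count.
Since `0 ≤ x ≤ θ`, a single subtraction brings `V + x ∈ [0, 2θ)` back into `[0, θ)`, and a
potential in `[0, θ)` pins `n` down as `⌊T x / θ⌋`. -/

theorem Int.floor_div_eq_of_sub_mul_mem_Ico {a θ : ℝ} {n : ℤ} (hθ : 0 < θ)
    (h : a - θ * n ∈ Set.Ico 0 θ) : ⌊a / θ⌋ = n := by
  obtain ⟨h0, h1⟩ := h
  rw [Int.floor_eq_iff, le_div_iff₀ hθ, div_lt_iff₀ hθ]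
  constructor <;> linarith

def IsIntegrateAndFire (θ x : ℝ) (V : ℕ → ℝ) (s : ℕ → ℕ) : Prop :=
  ∀ i : ℕ, (θ ≤ V i + x → s (i + 1) = 1 ∧ V (i + 1) = V i + x - θ) ∧
    (V i + x < θ → s (i + 1) = 0 ∧ V (i + 1) = V i + x)

namespace IsIntegrateAndFire

variable {θ x : ℝ} {V : ℕ → ℝ} {s : ℕ → ℕ}

theorem succ_eq (hV : IsIntegrateAndFire θ x V s) (i : ℕ) :
    V (i + 1) = V i + x - θ * s (i + 1) := by
  rcases le_or_gt θ (V i + x) with h | h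
  · obtain ⟨hs, hVs⟩ := (hV i).1 h
    simp [hs, hVs]
  · obtain ⟨hs, hVs⟩ := (hV i).2 h
    simp [hs, hVs]

theorem eq_sub_mul_sum (hV : IsIntegrateAndFire θ x V s) (hV0 : V 0 = 0) (i : ℕ) :
    V i = i * x - θ * ∑ j ∈ Finset.Icc 1 i, (s j : ℝ) := by
  induction i with
  | zero => simp [hV0]
  | succ i ih =>
    rw [hV.succ_eq, ih, Finset.sum_Icc_succ_top (by omega)]
    push_cast
    ring

theorem mem_Ico (hV : IsIntegrateAndFire θ x V s) (hθ : 0 < θ) (hx0 : 0 ≤ x) (hxθ : x ≤ θ)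
    (hV0 : V 0 = 0) (i : ℕ) : V i ∈ Set.Ico 0 θ := by
  induction i with
  | zero => simpa [hV0] using hθ
  | succ i ih =>
    obtain ⟨hlo, hhi⟩ := ih
    rcases le_or_gt θ (V i + x) with h | h
    · obtain ⟨-, hVs⟩ := (hV i).1 h
      rw [hVs]
      constructor <;> linarith
    · obtain ⟨-, hVs⟩ := (hV i).2 h
      rw [hVs]
      constructor <;> linarith

end IsIntegrateAndFire

theorem integrate_and_fire_spike_count_general (θ x : ℝ) (hθ : 0 < θ) (hx0 : 0 ≤ x)
    (hxθ : x ≤ θ) (T : ℕ) (V : ℕ → ℝ) (s : ℕ → ℕ)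
    (hV0 : V 0 = 0)
    (hrec : ∀ i : ℕ,
      (θ ≤ V i + x → s (i + 1) = 1 ∧ V (i + 1) = V i + x - θ) ∧
      (V i + x < θ → s (i + 1) = 0 ∧ V (i + 1) = V i + x)) :
    (∀ i : ℕ, V i = i * x - θ * ∑ j ∈ Finset.Icc 1 i, (s j : ℝ) ∧
        0 ≤ V i ∧ V i < θ) ∧
    (∑ i ∈ Finset.Icc 1 T, (s i : ℤ)) = ⌊(T : ℝ) * x / θ⌋ := by
  have hV : IsIntegrateAndFire θ x V s := hrec
  refine ⟨fun i => ⟨hV.eq_sub_mul_sum hV0 i, hV.mem_Ico hθ hx0 hxθ hV0 i⟩, ?_⟩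
  refine (Int.floor_div_eq_of_sub_mul_mem_Ico hθ ?_).symm
  push_cast
  rw [← hV.eq_sub_mul_sum hV0 T]
  exact hV.mem_Ico hθ hx0 hxθ hV0 T

/-- Integrate-and-fire spike count correctness: with threshold `θ > 0`, constant input
`0 ≤ x ≤ θ`, membrane potential `V` and spike train `s` defined by the
integrate-and-fire recursion, we have `Vᵢ = i·x − θ·Σ_{j≤i} sⱼ` with `0 ≤ Vᵢ < θ`, and
the total spike count equals `⌊T·x/θ⌋`. -/
theorem integrate_and_fire_spike_count (θ x : ℝ) (hθ : 0 < θ) (hx0 : 0 ≤ x)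
    (hxθ : x ≤ θ) (T : ℕ) (hT : 0 < T) (V : ℕ → ℝ) (s : ℕ → ℕ)
    (hV0 : V 0 = 0)
    (hrec : ∀ i : ℕ,
      (θ ≤ V i + x → s (i + 1) = 1 ∧ V (i + 1) = V i + x - θ) ∧
      (V i + x < θ → s (i + 1) = 0 ∧ V (i + 1) = V i + x)) :
    (∀ i : ℕ, V i = i * x - θ * ∑ j ∈ Finset.Icc 1 i, (s j : ℝ) ∧
        0 ≤ V i ∧ V i < θ) ∧
    (∑ i ∈ Finset.Icc 1 T, (s i : ℤ)) = ⌊(T : ℝ) * x / θ⌋ :=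
  integrate_and_fire_spike_count_general θ x hθ hx0 hxθ T V s hV0 hrec
end
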